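/- arXiv:1805.00142 — 2 statements merged into one kernel-verified Lean document; each statement's English description precedes it below -/
import Mathlib

section
/- For fixed θ ∈ (0,1), the induced haptic success probability η₁(η₂) = 1 - (1/θ² - 1/(1-η₂)²)^{-1/2} satisfies η₁(η₂) > η₂ if and only if η₂ < 1 - θ·√2 (with η₂ ∈ [0, 1-θ)). -/
open Real

theorem rpow_neg_half_lt_iff {a x : ℝ} (ha : 0 < a) (hx : 0 < x) :
    a ^ (-(1 / 2) : ℝ) < x ↔ 1 / x ^ 2 < a := by
  rw [show (-(1 / 2) : ℝ) = (-2)⁻¹ by norm_num, rpow_inv_lt_iff_of_neg ha hx (by norm_num),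
    rpow_neg hx.le, rpow_two, one_div]

theorem one_div_sq_lt_sub_one_div_sq_iff {θ x : ℝ} (hθ : 0 < θ) (hx : 0 < x) :
    1 / x ^ 2 < 1 / θ ^ 2 - 1 / x ^ 2 ↔ θ * √2 < x := by
  calc 1 / x ^ 2 < 1 / θ ^ 2 - 1 / x ^ 2
      ↔ 2 * θ ^ 2 < 1 * x ^ 2 := by
        rw [lt_sub_iff_add_lt, ← add_div, one_add_one_eq_two,
          div_lt_div_iff₀ (by positivity) (by positivity)]
    _ ↔ (θ * √2) ^ 2 < x ^ 2 := by rw [mul_pow, sq_sqrt zero_le_two, mul_comm, one_mul]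
    _ ↔ θ * √2 < x := pow_lt_pow_iff_left₀ (by positivity) hx.le two_ne_zero

theorem eta1_gt_eta2_iff_general (θ η₂ : ℝ) (hθ0 : 0 < θ)
    (hη₂ : η₂ < 1 - θ) :
    (1 - (1 / θ ^ 2 - 1 / (1 - η₂) ^ 2) ^ (-(1 / 2) : ℝ) > η₂) ↔
      η₂ < 1 - θ * Real.sqrt 2 := by
  have hθx : θ < 1 - η₂ := by linarith
  have hx : 0 < 1 - η₂ := hθ0.trans hθx
  have hA : 0 < 1 / θ ^ 2 - 1 / (1 - η₂) ^ 2 :=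
    sub_pos.mpr <| one_div_lt_one_div_of_lt (by positivity) <|
      pow_lt_pow_left₀ hθx hθ0.le two_ne_zero
  rw [gt_iff_lt, lt_sub_comm, rpow_neg_half_lt_iff hA hx,
    one_div_sq_lt_sub_one_div_sq_iff hθ0 hx, lt_sub_comm]

/-- For θ ∈ (0,1) and η₂ ∈ [0, 1-θ), the induced haptic success probability
η₁(η₂) = 1 - (1/θ² - 1/(1-η₂)²)^(-1/2) satisfies η₁(η₂) > η₂ iff η₂ < 1 - θ√2. -/
theorem eta1_gt_eta2_iff (θ η₂ : ℝ) (hθ0 : 0 < θ) (hθ1 : θ < 1)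
    (hη₂0 : 0 ≤ η₂) (hη₂ : η₂ < 1 - θ) :
    (1 - (1 / θ ^ 2 - 1 / (1 - η₂) ^ 2) ^ (-(1 / 2) : ℝ) > η₂) ↔
      η₂ < 1 - θ * Real.sqrt 2 :=
  eta1_gt_eta2_iff_general θ η₂ hθ0 hη₂
end

section
/- Let t > 0, α > 2. Then 1/₂F₁(1, -2/α; 1 - 2/α; -t) lies between (1 + c_L·t)^{-2/α} and (1 + c_U·t)^{-2/α}, where c_L = α/(α-2) and c_U = (2π/(α·sin(2π/α)))^{α/2}; specifically (1 + c_U·t)^{-2/α} ≤ 1/₂F₁(1, -2/α; 1-2/α; -t) ≤ (1 + c_L·t)^{-2/α}. -/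
/-
Write `p = α / 2`, `b = 1 / p` and `J x = ∫_x^∞ du / (1 + u^p)`, so that the hypergeometric
value is `F t = 1 + t^b J(t^(-b))`. For a constant `c ≥ 0` consider the rescaled gap
`g t = t^(-b) ((1 + c t)^b - F t)`. Its derivative is `b t^(-b-1) (1/(1+t) - (1 + c t)^(b-1))`,
whose sign is that of `(1 + c t)^(1-b) - (1 + t)`, a concave function of `t` vanishing at `0`;
moreover `g → 0` as `t → 0⁺` and `g → c^b - J 0` as `t → ∞`.

For `c = 1 / (1 - b)` Bernoulli's inequality makes `g` nonincreasing, so `g ≤ 0`. For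
`c = (J 0)^p` both limits vanish and `g` first increases and then decreases, so `g ≥ 0`.
The reflection formula `B(b, 1 - b) = π / sin(π b)` evaluates `J 0 = (π / p) / sin(π / p)`.
-/

open Real MeasureTheory

/-- The Gauss hypergeometric value ₂F₁(1, -2/α; 1-2/α; -t) relevant to Poisson
cellular coverage, expressed via its standard integral form:
₂F₁(1, -2/α; 1-2/α; -t) = 1 + t^(2/α) · ∫_{t^(-2/α)}^∞ du/(1+u^(α/2)). -/
noncomputable def twoF₁cov (α t : ℝ) : ℝ :=
  1 + t ^ (2 / α) * ∫ u in Set.Ioi (t ^ (-(2 / α))), (1 + u ^ (α / 2))⁻¹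

open Set Filter Topology

theorem integral_rpow_mul_one_sub_rpow_neg {a : ℝ} (ha₀ : 0 < a) (ha₁ : a < 1) :
    ∫ x in (0:ℝ)..1, x ^ (a - 1) * (1 - x) ^ (-a) = π / sin (π * a) := by
  have hbeta : Complex.betaIntegral a (1 - a) = π / Complex.sin (π * a) := by
    rw [← Complex.Gamma_mul_Gamma_one_sub, ← div_one (_ * _), ← Complex.Gamma_one,
      ← add_sub_cancel (a : ℂ) 1, Complex.betaIntegral_eq_Gamma_mul_div] <;> simp [ha₀, ha₁]
  have hreal : Complex.betaIntegral a (1 - a) =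
      ↑(∫ x in (0:ℝ)..1, x ^ (a - 1) * (1 - x) ^ (-a)) := by
    rw [Complex.betaIntegral, ← intervalIntegral.integral_ofReal]
    refine intervalIntegral.integral_congr fun x hx => ?_
    rw [uIcc_of_le zero_le_one] at hx
    simp only [Complex.ofReal_mul, Complex.ofReal_cpow hx.1,
      Complex.ofReal_cpow (sub_nonneg.2 hx.2)]
    push_cast
    ring_nf
  exact_mod_cast hreal.symm.trans hbeta

theorem image_div_one_sub_Ioo : (fun s : ℝ => s / (1 - s)) '' Ioo 0 1 = Ioi 0 := by
  ext y
  constructor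
  · rintro ⟨s, ⟨hs₀, hs₁⟩, rfl⟩
    exact div_pos hs₀ (sub_pos.2 hs₁)
  · intro (hy : 0 < y)
    refine ⟨y / (1 + y), ⟨by positivity, (div_lt_one (by positivity)).2 (by linarith)⟩, ?_⟩
    field_simp
    ring

theorem integral_Ioi_rpow_div_one_add {a : ℝ} (ha₀ : 0 < a) (ha₁ : a < 1) :
    ∫ x in Ioi (0:ℝ), x ^ (a - 1) / (1 + x) = π / sin (π * a) := by
  have hderiv : ∀ s ∈ Ioo (0:ℝ) 1,
      HasDerivWithinAt (fun s => s / (1 - s)) (((1 - s) ^ 2)⁻¹) (Ioo 0 1) s := by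
    intro s ⟨_, hs₁⟩
    have h1s := sub_pos.2 hs₁
    refine (((hasDerivAt_id' s).div ((hasDerivAt_id' s).const_sub 1) h1s.ne').congr_deriv
      ?_).hasDerivWithinAt
    field_simp
    ring
  have hinj : InjOn (fun s : ℝ => s / (1 - s)) (Ioo 0 1) := by
    intro s ⟨_, hs₁⟩ u ⟨_, hu₁⟩ hsu
    have := sub_pos.2 hs₁
    have := sub_pos.2 hu₁
    field_simp at hsu
    linarith
  rw [← image_div_one_sub_Ioo,
    integral_image_eq_integral_abs_deriv_smul measurableSet_Ioo hderiv hinj,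
    ← integral_rpow_mul_one_sub_rpow_neg ha₀ ha₁,
    intervalIntegral.integral_of_le zero_le_one, integral_Ioc_eq_integral_Ioo]
  refine setIntegral_congr_fun measurableSet_Ioo fun s ⟨hs₀, hs₁⟩ => ?_
  have h1s : 0 < 1 - s := sub_pos.2 hs₁
  have hsum : 1 + s / (1 - s) = (1 - s)⁻¹ := by field_simp; ring
  rw [smul_eq_mul, abs_of_pos (by positivity), hsum, Real.div_rpow hs₀.le h1s.le,
    Real.rpow_sub_one h1s.ne', Real.rpow_neg h1s.le]
  field_simp

theorem integral_Ioi_inv_one_add_rpow {p : ℝ} (hp : 1 < p) :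
    ∫ u in Ioi (0:ℝ), (1 + u ^ p)⁻¹ = π / p / sin (π / p) := by
  have hp₀ : 0 < p := by linarith
  rw [← integral_comp_rpow_Ioi (fun u => (1 + u ^ p)⁻¹) (inv_ne_zero hp₀.ne')]
  have hcongr : EqOn (fun x : ℝ => (|p⁻¹| * x ^ (p⁻¹ - 1)) • (1 + (x ^ p⁻¹) ^ p)⁻¹)
      (fun x => p⁻¹ * (x ^ (p⁻¹ - 1) / (1 + x))) (Ioi 0) := fun x (hx : 0 < x) => by
    dsimp only
    rw [← Real.rpow_mul hx.le, inv_mul_cancel₀ hp₀.ne', Real.rpow_one, smul_eq_mul,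
      abs_of_pos (inv_pos.2 hp₀)]
    ring
  rw [setIntegral_congr_fun measurableSet_Ioi hcongr, integral_const_mul,
    integral_Ioi_rpow_div_one_add (inv_pos.2 hp₀) (inv_lt_one_of_one_lt₀ hp),
    ← div_eq_mul_inv]
  ring

noncomputable def tailIntegral (p x : ℝ) : ℝ := ∫ u in Ioi x, (1 + u ^ p)⁻¹

section TailIntegral

variable {p : ℝ}

theorem integrableOn_Ioi_inv_one_add_rpow (hp : 1 < p) {x : ℝ} (hx : 0 ≤ x) :
    IntegrableOn (fun u : ℝ => (1 + u ^ p)⁻¹) (Ioi x) := by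
  have hmeas : AEStronglyMeasurable (fun u : ℝ => (1 + u ^ p)⁻¹) := by fun_prop
  refine IntegrableOn.mono_set ?_ (Ioi_subset_Ioi hx)
  rw [← Ioc_union_Ioi_eq_Ioi zero_le_one, integrableOn_union]
  constructor
  · refine Measure.integrableOn_of_bounded (M := 1) (by simp) hmeas ?_
    filter_upwards [ae_restrict_mem measurableSet_Ioc] with u ⟨hu, _⟩
    rw [norm_inv, Real.norm_of_nonneg (by positivity)]
    exact inv_le_one_of_one_le₀ (le_add_of_nonneg_right (by positivity))
  · refine (integrableOn_Ioi_rpow_of_lt (neg_lt_neg hp) one_pos).mono' hmeas.restrict ?_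
    filter_upwards [ae_restrict_mem measurableSet_Ioi] with u (hu : 1 < u)
    rw [norm_inv, Real.norm_of_nonneg (by positivity), Real.rpow_neg (by positivity)]
    exact inv_anti₀ (by positivity) (by linarith)

theorem tailIntegral_eq_integral_Ioc_add (hp : 1 < p) {a b : ℝ} (ha : 0 ≤ a) (hab : a ≤ b) :
    tailIntegral p a = (∫ u in Ioc a b, (1 + u ^ p)⁻¹) + tailIntegral p b := by
  rw [tailIntegral, tailIntegral, ← Ioc_union_Ioi_eq_Ioi hab,
    setIntegral_union Ioc_disjoint_Ioi_same measurableSet_Ioi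
      ((integrableOn_Ioi_inv_one_add_rpow hp ha).mono_set Ioc_subset_Ioi_self)
      (integrableOn_Ioi_inv_one_add_rpow hp (ha.trans hab))]

theorem tailIntegral_le (hp : 1 < p) {x : ℝ} (hx : 0 < x) :
    tailIntegral p x ≤ x ^ (1 - p) / (p - 1) := by
  calc tailIntegral p x ≤ ∫ u in Ioi x, u ^ (-p) := by
        refine setIntegral_mono_on (integrableOn_Ioi_inv_one_add_rpow hp hx.le)
          (integrableOn_Ioi_rpow_of_lt (neg_lt_neg hp) hx) measurableSet_Ioi
          fun u (hu : x < u) => ?_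
        have hu₀ := hx.trans hu
        rw [Real.rpow_neg hu₀.le]
        exact inv_anti₀ (by positivity) (by linarith)
    _ = x ^ (1 - p) / (p - 1) := by
        rw [integral_Ioi_rpow_of_lt (neg_lt_neg hp) hx, neg_add_eq_sub, ← neg_sub, div_neg,
          neg_div, neg_neg]

theorem tailIntegral_nonneg {x : ℝ} (hx : 0 ≤ x) : 0 ≤ tailIntegral p x :=
  setIntegral_nonneg measurableSet_Ioi fun u (hu : x < u) => by
    have := hx.trans hu.le
    positivity

theorem tendsto_tailIntegral_atTop (hp : 1 < p) : Tendsto (tailIntegral p) atTop (𝓝 0) := by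
  have hbound : Tendsto (fun x : ℝ => x ^ (1 - p) / (p - 1)) atTop (𝓝 0) := by
    simpa using (tendsto_rpow_neg_atTop (sub_pos.2 hp)).div_const (p - 1) |>.congr fun x => by
      rw [neg_sub]
  refine tendsto_of_tendsto_of_tendsto_of_le_of_le' tendsto_const_nhds hbound ?_ ?_
  · filter_upwards [eventually_ge_atTop 0] with x hx
    exact tailIntegral_nonneg hx
  · filter_upwards [eventually_gt_atTop 0] with x hx
    exact tailIntegral_le hp hx

theorem tendsto_tailIntegral_nhdsGT_zero (hp : 1 < p) :
    Tendsto (tailIntegral p) (𝓝[>] 0) (𝓝 (tailIntegral p 0)) := by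
  have hlower : Tendsto (fun x => tailIntegral p 0 - x) (𝓝[>] 0) (𝓝 (tailIntegral p 0)) := by
    simpa using
      ((continuous_sub_left (tailIntegral p 0)).tendsto 0).mono_left nhdsWithin_le_nhds
  refine tendsto_of_tendsto_of_tendsto_of_le_of_le' hlower tendsto_const_nhds ?_ ?_ <;>
    filter_upwards [self_mem_nhdsWithin] with x (hx : 0 < x) <;>
    rw [tailIntegral_eq_integral_Ioc_add hp le_rfl hx.le]
  · have : ∫ u in Ioc 0 x, (1 + u ^ p)⁻¹ ≤ x := by
      simpa [hx.le] using setIntegral_mono_on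
        ((integrableOn_Ioi_inv_one_add_rpow hp le_rfl).mono_set Ioc_subset_Ioi_self)
        (integrableOn_const (by simp)) measurableSet_Ioc fun u (hu : u ∈ Ioc 0 x) =>
          inv_le_one_of_one_le₀ (le_add_of_nonneg_right (by have := hu.1.le; positivity))
    linarith
  · have : 0 ≤ ∫ u in Ioc 0 x, (1 + u ^ p)⁻¹ :=
      setIntegral_nonneg measurableSet_Ioc fun u (hu : u ∈ Ioc 0 x) => by
        have := hu.1.le
        positivity
    linarith

theorem hasDerivAt_tailIntegral (hp : 1 < p) {x : ℝ} (hx : 0 < x) :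
    HasDerivAt (tailIntegral p) (-(1 + x ^ p)⁻¹) x := by
  have hint : IntervalIntegrable (fun u : ℝ => (1 + u ^ p)⁻¹) volume 0 x :=
    (intervalIntegrable_iff_integrableOn_Ioc_of_le hx.le).2
      ((integrableOn_Ioi_inv_one_add_rpow hp le_rfl).mono_set Ioc_subset_Ioi_self)
  have hcont : ContinuousAt (fun u : ℝ => (1 + u ^ p)⁻¹) x :=
    ((continuousAt_const.add (Real.continuousAt_rpow_const x p (Or.inl hx.ne'))).inv₀
      (add_pos one_pos (Real.rpow_pos_of_pos hx p)).ne')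
  have hftc := (intervalIntegral.integral_hasDerivAt_right hint
    (by fun_prop : Measurable _).stronglyMeasurable.stronglyMeasurableAtFilter hcont).const_sub
      (tailIntegral p 0)
  refine hftc.congr_of_eventuallyEq ?_
  filter_upwards [lt_mem_nhds hx] with y hy
  rw [intervalIntegral.integral_of_le hy.le, tailIntegral_eq_integral_Ioc_add hp le_rfl hy.le]
  ring

end TailIntegral

section MonotoneLimits

variable {g g' : ℝ → ℝ} {a l t : ℝ}

theorem le_of_tendsto_nhdsGT_of_deriv_nonneg (hat : a < t)
    (hg : ∀ s ∈ Ioc a t, HasDerivAt g (g' s) s) (hg' : ∀ s ∈ Ioo a t, 0 ≤ g' s)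
    (ha : Tendsto g (𝓝[>] a) (𝓝 l)) : l ≤ g t := by
  have hmono : MonotoneOn g (Ioc a t) :=
    monotoneOn_of_hasDerivWithinAt_nonneg (convex_Ioc a t)
      (fun s hs => (hg s hs).continuousAt.continuousWithinAt)
      (fun s hs => (hg s (interior_subset hs)).hasDerivWithinAt)
      (fun s hs => hg' s (by rwa [interior_Ioc] at hs))
  refine le_of_tendsto ha ?_
  filter_upwards [Ioo_mem_nhdsGT hat] with s hs
  exact hmono ⟨hs.1, hs.2.le⟩ ⟨hat, le_rfl⟩ hs.2.le

theorem le_of_tendsto_atTop_of_deriv_nonpos (hg : ∀ s ∈ Ici t, HasDerivAt g (g' s) s)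
    (hg' : ∀ s ∈ Ioi t, g' s ≤ 0) (h_top : Tendsto g atTop (𝓝 l)) : l ≤ g t := by
  have hanti : AntitoneOn g (Ici t) :=
    antitoneOn_of_hasDerivWithinAt_nonpos (convex_Ici t)
      (fun s hs => (hg s hs).continuousAt.continuousWithinAt)
      (fun s hs => (hg s (interior_subset hs)).hasDerivWithinAt)
      (fun s hs => hg' s (by rwa [interior_Ici] at hs))
  refine le_of_tendsto h_top ?_
  filter_upwards [eventually_ge_atTop t] with s hs
  exact hanti self_mem_Ici hs hs

theorem nonneg_of_tendsto_zero_of_unimodal (ht : 0 < t)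
    (hg : ∀ s, 0 < s → HasDerivAt g (g' s) s)
    (hg' : ∀ r s, 0 < r → r ≤ s → 0 ≤ g' s → 0 ≤ g' r)
    (h₀ : Tendsto g (𝓝[>] 0) (𝓝 0)) (h_top : Tendsto g atTop (𝓝 0)) : 0 ≤ g t := by
  by_cases hgt : 0 ≤ g' t
  · exact le_of_tendsto_nhdsGT_of_deriv_nonneg ht (fun s hs => hg s hs.1)
      (fun s hs => hg' s t hs.1 hs.2.le hgt) h₀
  · exact le_of_tendsto_atTop_of_deriv_nonpos (fun s hs => hg s (ht.trans_le hs))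
      (fun s (hs : t < s) => le_of_not_ge fun h => hgt (hg' t s ht hs.le h)) h_top

end MonotoneLimits

theorem one_add_le_one_add_mul_rpow_of_le {c q s t : ℝ} (hc : 0 ≤ c) (hq₀ : 0 ≤ q)
    (hq₁ : q ≤ 1) (hs : 0 < s) (hst : s ≤ t) (h : 1 + t ≤ (1 + c * t) ^ q) :
    1 + s ≤ (1 + c * s) ^ q := by
  have ht : 0 < t := hs.trans_le hst
  have hconc := (Real.concaveOn_rpow hq₀ hq₁).2 (mem_Ici.2 zero_le_one)
    (mem_Ici.2 (by positivity : (0:ℝ) ≤ 1 + c * t)) (sub_nonneg.2 ((div_le_one ht).2 hst))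
    (div_nonneg hs.le ht.le) (sub_add_cancel 1 (s / t))
  have hcomb : (1 - s / t) * 1 + s / t * (1 + c * t) = 1 + c * s := by
    field_simp
    ring
  simp only [smul_eq_mul, Real.one_rpow, hcomb] at hconc
  calc 1 + s = (1 - s / t) * 1 + s / t * (1 + t) := by field_simp; ring
    _ ≤ (1 - s / t) * 1 + s / t * (1 + c * t) ^ q := by gcongr
    _ ≤ (1 + c * s) ^ q := hconc

theorem hasDerivAt_one_add_mul_rpow_mul_rpow_neg (b c : ℝ) {t : ℝ} (ht : 0 < t)
    (hct : 0 < 1 + c * t) :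
    HasDerivAt (fun t => (1 + c * t) ^ b * t ^ (-b))
      (-(b * t ^ (-b - 1)) * (1 + c * t) ^ (b - 1)) t := by
  have hA : HasDerivAt (fun t => (1 + c * t) ^ b) (b * (1 + c * t) ^ (b - 1) * c) t :=
    (((hasDerivAt_id' t).const_mul c).const_add 1).rpow_const (Or.inl hct.ne') |>.congr_deriv
      (by ring)
  refine (hA.mul (Real.hasDerivAt_rpow_const (Or.inl ht.ne'))).congr_deriv ?_
  rw [Real.rpow_sub_one hct.ne', Real.rpow_sub_one ht.ne']
  field_simp
  ring

section ScaledGap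

variable {p c : ℝ}

theorem hasDerivAt_rpow_neg_add_tailIntegral (hp : 1 < p) {t : ℝ} (ht : 0 < t) :
    HasDerivAt (fun t => t ^ (-p⁻¹) + tailIntegral p (t ^ (-p⁻¹)))
      (-(p⁻¹ * t ^ (-p⁻¹ - 1)) * (1 + t)⁻¹) t := by
  have hx : HasDerivAt (fun t => t ^ (-p⁻¹)) (-p⁻¹ * t ^ (-p⁻¹ - 1)) t :=
    Real.hasDerivAt_rpow_const (Or.inl ht.ne')
  have hpow : (t ^ (-p⁻¹)) ^ p = t⁻¹ := by
    rw [← Real.rpow_mul ht.le, neg_mul, inv_mul_cancel₀ (by linarith), Real.rpow_neg_one]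
  refine (hx.add ((hasDerivAt_tailIntegral hp (by positivity)).comp t hx)).congr_deriv ?_
  rw [hpow]
  field_simp
  ring

noncomputable def scaledGap (p c t : ℝ) : ℝ :=
  (1 + c * t) ^ p⁻¹ * t ^ (-p⁻¹) - (t ^ (-p⁻¹) + tailIntegral p (t ^ (-p⁻¹)))

theorem rpow_mul_scaledGap {t : ℝ} (ht : 0 < t) :
    t ^ p⁻¹ * scaledGap p c t =
      (1 + c * t) ^ p⁻¹ - (1 + t ^ p⁻¹ * tailIntegral p (t ^ (-p⁻¹))) := by
  have h : t ^ p⁻¹ * t ^ (-p⁻¹) = 1 := by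
    rw [← Real.rpow_add ht, add_neg_cancel, Real.rpow_zero]
  rw [scaledGap]
  linear_combination ((1 + c * t) ^ p⁻¹ - 1) * h

theorem hasDerivAt_scaledGap (hp : 1 < p) (hc : 0 ≤ c) {t : ℝ} (ht : 0 < t) :
    HasDerivAt (scaledGap p c)
      (p⁻¹ * t ^ (-p⁻¹ - 1) * ((1 + t)⁻¹ - ((1 + c * t) ^ (1 - p⁻¹))⁻¹)) t := by
  have hct : 0 < 1 + c * t := by positivity
  refine ((hasDerivAt_one_add_mul_rpow_mul_rpow_neg p⁻¹ c ht hct).sub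
    (hasDerivAt_rpow_neg_add_tailIntegral hp ht)).congr_deriv ?_
  rw [← Real.rpow_neg hct.le, neg_sub]
  ring

theorem tendsto_scaledGap_nhdsGT_zero (hp : 1 < p) (hc : 0 ≤ c) :
    Tendsto (scaledGap p c) (𝓝[>] 0) (𝓝 0) := by
  have hb₀ : 0 < p⁻¹ := inv_pos.2 (by linarith)
  have hb₁ : p⁻¹ < 1 := inv_lt_one_of_one_lt₀ hp
  have hupper : Tendsto (fun t : ℝ => p⁻¹ * c * t ^ (1 - p⁻¹)) (𝓝[>] 0) (𝓝 0) := by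
    have := ((Real.continuous_rpow_const (sub_pos.2 hb₁).le).tendsto 0).mono_left
      (nhdsWithin_le_nhds (s := Ioi 0))
    simpa [Real.zero_rpow (sub_pos.2 hb₁).ne'] using this.const_mul (p⁻¹ * c)
  have hbound :
      Tendsto (fun t : ℝ => ((1 + c * t) ^ p⁻¹ - 1) * t ^ (-p⁻¹)) (𝓝[>] 0) (𝓝 0) := by
    refine tendsto_of_tendsto_of_tendsto_of_le_of_le' tendsto_const_nhds hupper ?_ ?_ <;>
      filter_upwards [self_mem_nhdsWithin] with t (ht : 0 < t)
    · have : 1 ≤ (1 + c * t) ^ p⁻¹ := Real.one_le_rpow (by nlinarith) hb₀.le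
      exact mul_nonneg (by linarith) (by positivity)
    · have hbern : (1 + c * t) ^ p⁻¹ ≤ 1 + p⁻¹ * (c * t) :=
        rpow_one_add_le_one_add_mul_self (by nlinarith) hb₀.le hb₁.le
      calc ((1 + c * t) ^ p⁻¹ - 1) * t ^ (-p⁻¹) ≤ p⁻¹ * (c * t) * t ^ (-p⁻¹) := by
            gcongr
            linarith
        _ = p⁻¹ * c * t ^ (1 - p⁻¹) := by
          rw [Real.rpow_sub ht, Real.rpow_one, Real.rpow_neg ht.le]
          ring
  have htail : Tendsto (fun t => tailIntegral p (t ^ (-p⁻¹))) (𝓝[>] 0) (𝓝 0) :=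
    (tendsto_tailIntegral_atTop hp).comp (tendsto_rpow_neg_nhdsGT_zero (neg_lt_zero.2 hb₀))
  simpa using (hbound.sub htail).congr fun t => by rw [scaledGap]; ring

theorem tendsto_scaledGap_atTop (hp : 1 < p) (hc : 0 ≤ c) :
    Tendsto (scaledGap p c) atTop (𝓝 (c ^ p⁻¹ - tailIntegral p 0)) := by
  have hb₀ : 0 < p⁻¹ := inv_pos.2 (by linarith)
  have hbound :
      Tendsto (fun t : ℝ => (1 + c * t) ^ p⁻¹ * t ^ (-p⁻¹)) atTop (𝓝 (c ^ p⁻¹)) := by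
    have hlim : Tendsto (fun t : ℝ => (t⁻¹ + c) ^ p⁻¹) atTop (𝓝 (c ^ p⁻¹)) :=
      (Real.continuousAt_rpow_const c p⁻¹ (Or.inr hb₀.le)).tendsto.comp
        (by simpa using tendsto_inv_atTop_zero.add_const c)
    refine hlim.congr' ?_
    filter_upwards [eventually_gt_atTop 0] with t ht
    rw [Real.rpow_neg ht.le, ← Real.inv_rpow ht.le,
      ← Real.mul_rpow (by positivity) (by positivity)]
    congr 1
    field_simp
  have hx : Tendsto (fun t : ℝ => t ^ (-p⁻¹)) atTop (𝓝[>] 0) :=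
    tendsto_nhdsWithin_iff.2 ⟨tendsto_rpow_neg_atTop hb₀,
      (eventually_gt_atTop 0).mono fun t ht => Real.rpow_pos_of_pos ht _⟩
  have h := hbound.sub ((tendsto_rpow_neg_atTop hb₀).add
    ((tendsto_tailIntegral_nhdsGT_zero hp).comp hx))
  rwa [zero_add] at h

theorem scaledGap_nonpos (hp : 1 < p) {t : ℝ} (ht : 0 < t) :
    scaledGap p (1 - p⁻¹)⁻¹ t ≤ 0 := by
  have hq : 0 < 1 - p⁻¹ := sub_pos.2 (inv_lt_one_of_one_lt₀ hp)
  have hq₁ : 1 - p⁻¹ ≤ 1 := sub_le_self 1 (inv_nonneg.2 (by linarith))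
  have hc : 0 ≤ (1 - p⁻¹)⁻¹ := by positivity
  have hderiv : ∀ s ∈ Ioo 0 t, 0 ≤ -(p⁻¹ * s ^ (-p⁻¹ - 1) *
      ((1 + s)⁻¹ - ((1 + (1 - p⁻¹)⁻¹ * s) ^ (1 - p⁻¹))⁻¹)) := fun s ⟨hs, _⟩ => by
    have hbern : (1 + (1 - p⁻¹)⁻¹ * s) ^ (1 - p⁻¹) ≤ 1 + s := by
      simpa [← mul_assoc, mul_inv_cancel₀ hq.ne'] using
        rpow_one_add_le_one_add_mul_self (by nlinarith : -1 ≤ (1 - p⁻¹)⁻¹ * s) hq.le hq₁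
    refine neg_nonneg.2 (mul_nonpos_of_nonneg_of_nonpos (by positivity)
      (sub_nonpos.2 (inv_anti₀ (by positivity) hbern)))
  exact neg_nonneg.1 <| le_of_tendsto_nhdsGT_of_deriv_nonneg (g := fun s => -scaledGap p _ s)
    ht (fun s hs => (hasDerivAt_scaledGap hp hc hs.1).neg) hderiv
    (by simpa using (tendsto_scaledGap_nhdsGT_zero hp hc).neg)

theorem scaledGap_nonneg (hp : 1 < p) (hc : 0 ≤ c) (hcJ : c ^ p⁻¹ = tailIntegral p 0) {t : ℝ}
    (ht : 0 < t) : 0 ≤ scaledGap p c t := by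
  have hq : 0 ≤ 1 - p⁻¹ := sub_nonneg.2 (inv_le_one_of_one_le₀ hp.le)
  have hq₁ : 1 - p⁻¹ ≤ 1 := sub_le_self 1 (inv_nonneg.2 (by linarith))
  have hsign : ∀ s, 0 < s →
      (0 ≤ p⁻¹ * s ^ (-p⁻¹ - 1) * ((1 + s)⁻¹ - ((1 + c * s) ^ (1 - p⁻¹))⁻¹) ↔
        1 + s ≤ (1 + c * s) ^ (1 - p⁻¹)) :=
    fun s hs => by
      have : 0 < p⁻¹ := inv_pos.2 (by linarith)
      rw [mul_nonneg_iff_of_pos_left (by positivity), sub_nonneg,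
        inv_le_inv₀ (by positivity) (by positivity)]
  refine nonneg_of_tendsto_zero_of_unimodal ht (fun s hs => hasDerivAt_scaledGap hp hc hs)
    (fun r s hr hrs h => (hsign r hr).2 <| one_add_le_one_add_mul_rpow_of_le hc hq hq₁
      hr hrs ((hsign s (hr.trans_le hrs)).1 h))
    (tendsto_scaledGap_nhdsGT_zero hp hc)
    (by simpa [hcJ] using tendsto_scaledGap_atTop hp hc)

end ScaledGap

theorem one_div_one_add_rpow_mul_tailIntegral_mem_Icc {p t : ℝ} (hp : 1 < p) (ht : 0 < t) :
    1 / (1 + t ^ p⁻¹ * tailIntegral p (t ^ (-p⁻¹))) ∈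
      Icc ((1 + tailIntegral p 0 ^ p * t) ^ (-p⁻¹))
        ((1 + (1 - p⁻¹)⁻¹ * t) ^ (-p⁻¹)) := by
  have hq : 0 < 1 - p⁻¹ := sub_pos.2 (inv_lt_one_of_one_lt₀ hp)
  have hJ₀ : 0 ≤ tailIntegral p 0 := tailIntegral_nonneg le_rfl
  have hlower := rpow_mul_scaledGap (c := (1 - p⁻¹)⁻¹) ht ▸
    mul_nonpos_of_nonneg_of_nonpos (by positivity) (scaledGap_nonpos hp ht)
  have hupper := rpow_mul_scaledGap (c := tailIntegral p 0 ^ p) ht ▸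
    mul_nonneg (by positivity) (scaledGap_nonneg hp (by positivity)
      (Real.rpow_rpow_inv hJ₀ (by linarith)) ht)
  set F := 1 + t ^ p⁻¹ * tailIntegral p (t ^ (-p⁻¹))
  rw [sub_nonpos] at hlower
  rw [sub_nonneg] at hupper
  have hF : 0 < F := lt_of_lt_of_le (by positivity) hlower
  rw [Real.rpow_neg (by positivity), Real.rpow_neg (by positivity), one_div]
  exact ⟨inv_anti₀ hF hupper, inv_anti₀ (by positivity) hlower⟩

/-- The exact SIR coverage probability 1/₂F₁(1,-2/α;1-2/α;-t) lies between the
closed-form bounds (1 + c_U·t)^(-2/α) and (1 + c_L·t)^(-2/α), where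
c_L = α/(α-2) and c_U = (2π/(α·sin(2π/α)))^(α/2). -/
theorem coverage_bounds (α t : ℝ) (hα : 2 < α) (ht : 0 < t) :
    (1 + (2 * π / (α * Real.sin (2 * π / α))) ^ (α / 2) * t) ^ (-(2 / α))
      ≤ 1 / twoF₁cov α t ∧
    1 / twoF₁cov α t ≤ (1 + (α / (α - 2)) * t) ^ (-(2 / α)) := by
  have hp : 1 < α / 2 := by linarith
  have hcL : (1 - (α / 2)⁻¹)⁻¹ = α / (α - 2) := by field_simp
  have hcU : tailIntegral (α / 2) 0 = 2 * π / (α * Real.sin (2 * π / α)) := by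
    rw [tailIntegral, integral_Ioi_inv_one_add_rpow hp]
    field_simp
  have hF :
      twoF₁cov α t = 1 + t ^ (α / 2)⁻¹ * tailIntegral (α / 2) (t ^ (-(α / 2)⁻¹)) := by
    rw [twoF₁cov, tailIntegral, inv_div]
  rw [hF, ← hcL, ← hcU, ← inv_div α 2]
  exact one_div_one_add_rpow_mul_tailIntegral_mem_Icc hp ht
end
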